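/- Every orbit of the map φ = F ∘ I ∘ F^{-1} ∘ R acting on S_n has size a power of 2; specifically, the orbit of w has size 2^h where h is the height (maximal number of edges on a root-to-leaf path) of the heap H(w). -/

import Mathlib

/-- The cycle of `w` containing `x`, listed starting at `x`:
`[x, w x, w² x, …]` with each element appearing once. -/
def cyc {n : ℕ} (w : Equiv.Perm (Fin n)) (x : Fin n) : List (Fin n) :=
  (List.range n).foldl (fun acc k => if (w ^ k) x ∈ acc then acc else acc ++ [(w ^ k) x]) []

/-- The Rényi–Foata word of `w`: write the canonical cycle decomposition
(each cycle starting with its largest element, cycles listed in increasing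
order of largest elements) and drop the parentheses. -/
def foataWord {n : ℕ} (w : Equiv.Perm (Fin n)) : List (Fin n) :=
  ((List.finRange n).filter (fun x => decide (∀ y ∈ cyc w x, y ≤ x))).flatMap (cyc w)

/-- The Rényi–Foata map, as a function `Fin n → Fin n` reading off the word. -/
def foataFun {n : ℕ} (w : Equiv.Perm (Fin n)) : Fin n → Fin n :=
  fun i => (foataWord w).getD i.val ⟨0, i.pos⟩

/-- One-line notation of a permutation, as a list of values in `Fin n`. -/
def oneLineF {n : ℕ} (w : Equiv.Perm (Fin n)) : List (Fin n) :=
  (List.finRange n).map w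

/-- One-line notation with natural-number entries (0-indexed values). -/
def oneLineN {n : ℕ} (w : Equiv.Perm (Fin n)) : List ℕ :=
  (List.finRange n).map fun i => (w i : ℕ)

/-- The Rényi–Foata word with natural-number entries. -/
def wordN {n : ℕ} (w : Equiv.Perm (Fin n)) : List ℕ :=
  (foataWord w).map Fin.val

/-- `i` is a record (left-to-right maximum) position of the word `L`. -/
def recB (L : List ℕ) (i : ℕ) : Bool :=
  decide (i < L.length ∧ ∀ j < i, L.getD j 0 < L.getD i 0)

/-- Number of records (left-to-right maxima) of the word `L`. -/
def recordCount (L : List ℕ) : ℕ :=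
  ((List.range L.length).filter (recB L)).length

/-- Number of fixed points (1-cycles) of `w`. -/
def fixCount {n : ℕ} (w : Equiv.Perm (Fin n)) : ℕ :=
  (Finset.univ.filter fun i : Fin n => w i = i).card

/-- `IsPhi w w'` says that `w' = φ(w)` where `φ = F ∘ I ∘ F⁻¹ ∘ R`:
first reverse the one-line notation of `w`, then apply `F⁻¹` (giving the
unique `u` whose Foata word is that reversal), invert `u`, and apply `F`. -/
def IsPhi {n : ℕ} (w w' : Equiv.Perm (Fin n)) : Prop :=
  ∃ u : Equiv.Perm (Fin n),
    foataWord u = (oneLineF w).reverse ∧ oneLineF w' = foataWord u⁻¹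

/-- `IsPhiBar w w'` says that `w' = φ̄(w)` where `φ̄ = I ∘ F⁻¹ ∘ R ∘ F`:
apply `F` to `w`, reverse the resulting word, apply `F⁻¹`, and invert. -/
def IsPhiBar {n : ℕ} (w w' : Equiv.Perm (Fin n)) : Prop :=
  foataWord w'⁻¹ = (foataWord w).reverse

/-- `IsGamma w w'` says that `w' = γ(w)` where `γ = I ∘ F⁻¹ ∘ C ∘ F`:
apply `F` to `w`, complement each entry of the resulting word, apply `F⁻¹`,
and invert. -/
def IsGamma {n : ℕ} (w w' : Equiv.Perm (Fin n)) : Prop :=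
  foataWord w'⁻¹ = (foataWord w).map Fin.rev

/-- Binary trees with natural-number labels. -/
inductive BTree where
  | nil : BTree
  | node : BTree → ℕ → BTree → BTree
deriving DecidableEq

/-- The list of labels of a binary tree, in inorder (left, root, right). -/
def BTree.labels : BTree → List ℕ
  | .nil => []
  | .node l m r => l.labels ++ m :: r.labels

/-- A binary tree is decreasing if labels strictly decrease along every path
from the root: every label in either subtree is smaller than the root. -/
def BTree.IsDec : BTree → Prop
  | .nil => True
  | .node l m r =>
      (∀ x ∈ l.labels, x < m) ∧ (∀ x ∈ r.labels, x < m) ∧ l.IsDec ∧ r.IsDec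

/-- Auxiliary fuel-based construction of the heap of a word: the root is the
maximum letter, the subtrees are the heaps of the subwords before and after
the maximum.  (Fuel `= L.length` always suffices.) -/
def heapAux : ℕ → List ℕ → BTree
  | 0, _ => .nil
  | _, [] => .nil
  | fuel + 1, L =>
      let m := L.max?.getD 0
      let i := L.idxOf m
      .node (heapAux fuel (L.take i)) m (heapAux fuel (L.drop (i + 1)))

/-- The heap (decreasing binary tree) of a word `L`. -/
def heapOf (L : List ℕ) : BTree := heapAux L.length L

/-- One-line notation of `w ∈ S_n` as a word with entries in `{1, …, n}`. -/
def oneLine1 {n : ℕ} (w : Equiv.Perm (Fin n)) : List ℕ :=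
  (List.finRange n).map fun i => (w i : ℕ) + 1

/-- The height of a binary tree: the number of edges on a longest path from
the root to a leaf (a single vertex has height `0`). -/
def BTree.eheight : BTree → ℕ
  | .nil => 0
  | .node .nil _ .nil => 0
  | .node l _ r => 1 + max l.eheight r.eheight

/-! Inverting a permutation reverses each of its cycles behind the cycle's leading maximum. On
Foata words, whose blocks start exactly at the left-to-right maxima, this means that
`F ∘ I ∘ F⁻¹` reverses the tail of every such block; hence the one-line notation of `φ w` is
`phiWord` applied to that of `w`. If `m` is the largest letter of `A ++ m :: B`, then
`phiWord (A ++ m :: B) = phiWord B ++ m :: A`, so `phiWord²` acts by `phiWord` on `A` and on `B`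
separately, i.e. on the two subtrees of the heap. Unless the word is a single letter, `phiWord`
itself moves the maximum, so the period at the root is twice the larger period of the subtrees,
and induction on the heap gives `2 ^ height`. -/

open Function

namespace List

variable {α : Type*}

theorem takeWhile_append_of_not_head {p : α → Bool} (L : List α) {Y : List α}
    (hY : ∀ b ∈ Y.head?, ¬ p b) : (L ++ Y).takeWhile p = L.takeWhile p := by
  induction L with
  | nil => cases Y <;> simp_all
  | cons a L ih => simp [takeWhile_cons, ih]

theorem dropWhile_append_of_not_head {p : α → Bool} (L : List α) {Y : List α}
    (hY : ∀ b ∈ Y.head?, ¬ p b) : (L ++ Y).dropWhile p = L.dropWhile p ++ Y := by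
  induction L with
  | nil => cases Y <;> simp_all
  | cons a L ih => by_cases h : p a <;> simp [h, ih]

end List

section Words

variable {α β : Type*} [LinearOrder α] [LinearOrder β]

def reverseBlockTails : List α → List α
  | [] => []
  | a :: L => a :: (L.takeWhile (· < a)).reverse ++ reverseBlockTails (L.dropWhile (· < a))
termination_by L => L.length
decreasing_by exact Nat.lt_succ_of_le (List.dropWhile_sublist _).length_le

def phiWord (L : List α) : List α := reverseBlockTails L.reverse

@[simp] theorem reverseBlockTails_nil : reverseBlockTails ([] : List α) = [] := by
  rw [reverseBlockTails]

theorem reverseBlockTails_perm (L : List α) : (reverseBlockTails L).Perm L := by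
  fun_induction reverseBlockTails L with
  | case1 => rfl
  | case2 a L ih =>
    refine .cons a ?_
    have hsplit := ((List.reverse_perm (L.takeWhile (· < a))).append ih)
    rwa [List.takeWhile_append_dropWhile] at hsplit

theorem reverseBlockTails_cons_of_forall_lt {a : α} {T : List α} (hT : ∀ y ∈ T, y < a) :
    reverseBlockTails (a :: T) = a :: T.reverse := by
  rw [reverseBlockTails, List.takeWhile_eq_self_iff.mpr (by simpa using hT),
    List.dropWhile_eq_nil_iff.mpr (by simpa using hT), reverseBlockTails, List.append_nil]

theorem reverseBlockTails_append {X Y : List α} (h : ∀ x ∈ X, ∀ y ∈ Y.head?, x < y) :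
    reverseBlockTails (X ++ Y) = reverseBlockTails X ++ reverseBlockTails Y := by
  fun_induction reverseBlockTails X with
  | case1 => simp
  | case2 a L ih =>
    have hY : ∀ b ∈ Y.head?, ¬ decide (b < a) := fun b hb => by
      simpa using (h a (by simp) b hb).le
    have hR : ∀ x ∈ L.dropWhile (· < a), ∀ y ∈ Y.head?, x < y := fun x hx =>
      h x (List.mem_cons_of_mem a ((List.dropWhile_sublist _).subset hx))
    rw [List.cons_append, reverseBlockTails, List.takeWhile_append_of_not_head L hY,
      List.dropWhile_append_of_not_head L hY, ih hR]
    simp only [List.cons_append, List.append_assoc]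

theorem map_reverseBlockTails {f : α → β} (hf : StrictMono f) (L : List α) :
    (reverseBlockTails L).map f = reverseBlockTails (L.map f) := by
  fun_induction reverseBlockTails L with
  | case1 => simp
  | case2 a L ih =>
    have hp : ((· < f a) ∘ f : α → Bool) = (· < a) := by
      funext x
      simp [hf.lt_iff_lt]
    rw [List.map_cons, reverseBlockTails.eq_2, List.takeWhile_map,
      List.dropWhile_map, hp]
    simp only [List.map_append, List.map_cons, List.map_reverse, ih]

theorem reverseBlockTails_flatMap {S : List α} (hS : S.Pairwise (· < ·)) {t : α → List α}
    (ht : ∀ x ∈ S, ∀ y ∈ t x, y < x) :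
    reverseBlockTails (S.flatMap fun x => x :: t x) = S.flatMap fun x => x :: (t x).reverse := by
  induction S with
  | nil => simp
  | cons x S ih =>
    obtain ⟨hxS, hS⟩ := List.pairwise_cons.mp hS
    have hhead : ∀ z ∈ x :: t x, ∀ y ∈ (S.flatMap fun x => x :: t x).head?, z < y := by
      intro z hz y hy
      cases S with
      | nil => simp at hy
      | cons y' S =>
        obtain rfl : y' = y := by simpa using hy
        rcases List.mem_cons.mp hz with rfl | hz
        · exact hxS y' (by simp)
        · exact (ht x (by simp) z hz).trans (hxS y' (by simp))
    rw [List.flatMap_cons, reverseBlockTails_append hhead,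
      reverseBlockTails_cons_of_forall_lt (ht x (by simp)),
      ih hS fun y hy => ht y (List.mem_cons_of_mem x hy), List.flatMap_cons]

theorem phiWord_perm (L : List α) : (phiWord L).Perm L :=
  (reverseBlockTails_perm _).trans (List.reverse_perm L)

theorem map_phiWord {f : α → β} (hf : StrictMono f) (L : List α) :
    (phiWord L).map f = phiWord (L.map f) := by
  rw [phiWord, map_reverseBlockTails hf, List.map_reverse, phiWord]

theorem phiWord_append_cons {A B : List α} {m : α} (hA : ∀ x ∈ A, x < m)
    (hB : ∀ x ∈ B, x < m) : phiWord (A ++ m :: B) = phiWord B ++ m :: A := by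
  have hsplit : ∀ x ∈ B.reverse, ∀ y ∈ (m :: A.reverse).head?, x < y := by
    simpa using hB
  rw [phiWord, List.reverse_append, List.reverse_cons, List.append_assoc, List.singleton_append,
    reverseBlockTails_append hsplit,
    reverseBlockTails_cons_of_forall_lt (by simpa using hA), List.reverse_reverse, phiWord]

end Words

theorem Function.Semiconj.minimalPeriod_eq {α β : Type*} {f : α → β} {ga : α → α}
    {gb : β → β} (h : Semiconj f ga gb) (hf : Injective f) (x : α) :
    minimalPeriod gb (f x) = minimalPeriod ga x :=
  minimalPeriod_eq_minimalPeriod_iff.mpr fun n => by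
    simp only [IsPeriodicPt, IsFixedPt, ← (h.iterate_right n).eq x, hf.eq_iff]

theorem foldl_range_iterate_eq {α : Type*} [DecidableEq α] (f : α → α) (x : α)
    (hx : 0 < minimalPeriod f x) (N : ℕ) :
    (List.range N).foldl (fun acc k => if f^[k] x ∈ acc then acc else acc ++ [f^[k] x]) [] =
      (List.range (min N (minimalPeriod f x))).map (f^[·] x) := by
  induction N with
  | zero => simp
  | succ N ih =>
    rw [List.range_succ, List.foldl_append, ih, List.foldl_cons, List.foldl_nil]
    rcases lt_or_ge N (minimalPeriod f x) with hN | hN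
    · have hnew : f^[N] x ∉ (List.range N).map (f^[·] x) := by
        simp only [List.mem_map, List.mem_range, not_exists, not_and]
        exact fun j hj hjN => hj.ne (iterate_injOn_Iio_minimalPeriod (hj.trans hN) hN hjN)
      rw [min_eq_left hN.le, if_neg hnew, min_eq_left (show N + 1 ≤ _ from hN), List.range_succ,
        List.map_append]
      rfl
    · rw [min_eq_right hN, min_eq_right (hN.trans N.le_succ), if_pos]
      exact List.mem_map.mpr
        ⟨N % minimalPeriod f x, List.mem_range.mpr (Nat.mod_lt _ hx), iterate_mod_minimalPeriod_eq⟩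

theorem Equiv.Perm.minimalPeriod_inv {α : Type*} (u : Equiv.Perm α) (x : α) :
    minimalPeriod ⇑u⁻¹ x = minimalPeriod u x :=
  MulAction.period_inv u x

theorem Equiv.Perm.minimalPeriod_pos {α : Type*} [Finite α] (u : Equiv.Perm α) (x : α) :
    0 < minimalPeriod u x :=
  MulAction.period_pos_of_orderOf_pos (orderOf_pos u) x

section Cycles

variable {n : ℕ} (u : Equiv.Perm (Fin n)) (x : Fin n)

theorem cyc_eq_map_range : cyc u x = (List.range (minimalPeriod u x)).map fun k => (u ^ k) x := by
  have hle : minimalPeriod u x ≤ n := (Fintype.card_fin n).le.trans' minimalPeriod_le_card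
  have := foldl_range_iterate_eq u x (u.minimalPeriod_pos x) n
  rwa [min_eq_right hle] at this

theorem cyc_nodup : (cyc u x).Nodup := by
  rw [cyc_eq_map_range]
  refine List.Nodup.map_on (fun i hi j hj hij => ?_) List.nodup_range
  exact iterate_injOn_Iio_minimalPeriod (List.mem_range.mp hi) (List.mem_range.mp hj) hij

theorem cyc_eq_cons_tail : cyc u x = x :: (cyc u x).tail := by
  obtain ⟨c, hc⟩ := Nat.exists_eq_add_one_of_ne_zero (u.minimalPeriod_pos x).ne'
  rw [cyc_eq_map_range, hc, List.range_succ_eq_map]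
  simp

theorem cyc_inv : cyc u⁻¹ x = x :: (cyc u x).tail.reverse := by
  obtain ⟨c, hc⟩ := Nat.exists_eq_add_one_of_ne_zero (u.minimalPeriod_pos x).ne'
  have hback : ∀ k < c, (u⁻¹ ^ (k + 1)) x = (u ^ (c - 1 - k + 1)) x := by
    intro k hk
    rw [inv_pow, Equiv.Perm.inv_eq_iff_eq, ← Equiv.Perm.mul_apply, ← pow_add,
      show k + 1 + (c - 1 - k + 1) = c + 1 by omega, ← hc]
    exact iterate_minimalPeriod.symm
  rw [cyc_eq_map_range, cyc_eq_map_range, u.minimalPeriod_inv, hc, List.range_succ_eq_map,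
    List.map_cons, List.map_cons, List.tail_cons, pow_zero, Equiv.Perm.one_apply]
  simp only [← List.map_reverse, List.range_eq_range', List.reverse_range', List.map_map]
  congr 1
  refine List.map_congr_left fun k hk => ?_
  simpa using hback k (by simpa using hk)

theorem mem_cyc_inv {y : Fin n} : y ∈ cyc u⁻¹ x ↔ y ∈ cyc u x := by
  conv_rhs => rw [cyc_eq_cons_tail]
  simp [cyc_inv]

theorem foataWord_inv : foataWord u⁻¹ = reverseBlockTails (foataWord u) := by
  set S := (List.finRange n).filter fun x => decide (∀ y ∈ cyc u x, y ≤ x)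
  have hS : (List.finRange n).filter (fun x => decide (∀ y ∈ cyc u⁻¹ x, y ≤ x)) = S :=
    List.filter_congr fun x _ => decide_eq_decide.mpr (by simp only [mem_cyc_inv])
  have hsorted : S.Pairwise (· < ·) := (List.pairwise_lt_finRange n).sublist List.filter_sublist
  have htail : ∀ x ∈ S, ∀ y ∈ (cyc u x).tail, y < x := by
    intro x hx y hy
    have hmax : ∀ y ∈ cyc u x, y ≤ x := by simpa [S] using (List.mem_filter.mp hx).2
    have hnd := cyc_nodup u x
    rw [cyc_eq_cons_tail] at hnd
    exact (hmax y (List.mem_of_mem_tail hy)).lt_of_ne fun h => (List.nodup_cons.mp hnd).1 (h ▸ hy)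
  calc foataWord u⁻¹ = S.flatMap fun x => x :: (cyc u x).tail.reverse := by
        rw [foataWord, hS]
        exact congrArg S.flatMap (funext (cyc_inv u))
    _ = reverseBlockTails (S.flatMap fun x => x :: (cyc u x).tail) :=
        (reverseBlockTails_flatMap hsorted htail).symm
    _ = reverseBlockTails (foataWord u) := by
        rw [foataWord]
        simp only [← cyc_eq_cons_tail]
        rfl

end Cycles

section Period

variable {α : Type*} [LinearOrder α]

theorem phiWord_iterate_perm (k : ℕ) (L : List α) : (phiWord^[k] L).Perm L := by
  induction k with
  | zero => rfl
  | succ k ih => rw [iterate_succ_apply']; exact (phiWord_perm _).trans ih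

theorem phiWord_phiWord_append_cons {A B : List α} {m : α} (hA : ∀ x ∈ A, x < m)
    (hB : ∀ x ∈ B, x < m) : phiWord (phiWord (A ++ m :: B)) = phiWord A ++ m :: phiWord B := by
  rw [phiWord_append_cons hA hB,
    phiWord_append_cons (fun x hx => hB x ((phiWord_perm B).subset hx)) hA]

theorem phiWord_iterate_two_mul_append_cons (k : ℕ) {A B : List α} {m : α}
    (hA : ∀ x ∈ A, x < m) (hB : ∀ x ∈ B, x < m) :
    phiWord^[2 * k] (A ++ m :: B) = phiWord^[k] A ++ m :: phiWord^[k] B := by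
  induction k generalizing A B with
  | zero => rfl
  | succ k ih =>
    rw [Nat.mul_succ, iterate_add_apply,
      show phiWord^[2] (A ++ m :: B) = phiWord (phiWord (A ++ m :: B)) from rfl,
      phiWord_phiWord_append_cons hA hB,
      ih (fun x hx => hA x ((phiWord_perm A).subset hx))
        (fun x hx => hB x ((phiWord_perm B).subset hx)),
      iterate_succ_apply, iterate_succ_apply]

theorem isPeriodicPt_phiWord_two_mul_iff (k : ℕ) {A B : List α} {m : α}
    (hA : ∀ x ∈ A, x < m) (hB : ∀ x ∈ B, x < m) :
    IsPeriodicPt phiWord (2 * k) (A ++ m :: B) ↔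
      IsPeriodicPt phiWord k A ∧ IsPeriodicPt phiWord k B := by
  have hmA : m ∉ phiWord^[k] A := fun h => (hA m ((phiWord_iterate_perm k A).subset h)).false
  have hmB : m ∉ phiWord^[k] B := fun h => (hB m ((phiWord_iterate_perm k B).subset h)).false
  simp only [IsPeriodicPt, IsFixedPt, phiWord_iterate_two_mul_append_cons k hA hB,
    List.append_cons_inj_of_notMem hmA hmB, true_and]

theorem phiWord_append_cons_ne_self {A B : List α} {m : α} (hA : ∀ x ∈ A, x < m)
    (hB : ∀ x ∈ B, x < m) (hnd : (A ++ m :: B).Nodup) (hne : A ≠ [] ∨ B ≠ []) :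
    phiWord (A ++ m :: B) ≠ A ++ m :: B := by
  rw [phiWord_append_cons hA hB]
  intro h
  obtain ⟨-, -, rfl⟩ := (List.append_cons_inj_of_notMem
    (fun h => (hB m ((phiWord_perm B).subset h)).false) (fun h => (hA m h).false)).mp h
  obtain ⟨a, ha⟩ := List.exists_mem_of_ne_nil A (hne.elim id id)
  exact (List.nodup_append.mp hnd).2.2 a ha a (List.mem_cons_of_mem m ha) rfl

theorem minimalPeriod_phiWord_append_cons {A B : List α} {m : α} (hA : ∀ x ∈ A, x < m)
    (hB : ∀ x ∈ B, x < m) (hnd : (A ++ m :: B).Nodup) (hne : A ≠ [] ∨ B ≠ []) {a b : ℕ}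
    (ha : minimalPeriod phiWord A = 2 ^ a) (hb : minimalPeriod phiWord B = 2 ^ b) :
    minimalPeriod phiWord (A ++ m :: B) = 2 ^ (max a b + 1) := by
  refine minimalPeriod_eq_prime_pow ?_ ?_
  · cases h : max a b with
    | zero =>
      rw [pow_zero]
      exact phiWord_append_cons_ne_self hA hB hnd hne
    | succ k =>
      rw [pow_succ', isPeriodicPt_phiWord_two_mul_iff _ hA hB,
        isPeriodicPt_iff_minimalPeriod_dvd, isPeriodicPt_iff_minimalPeriod_dvd, ha, hb,
        Nat.pow_dvd_pow_iff_le_right Nat.one_lt_two, Nat.pow_dvd_pow_iff_le_right Nat.one_lt_two]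
      omega
  · rw [pow_succ', isPeriodicPt_phiWord_two_mul_iff _ hA hB,
      isPeriodicPt_iff_minimalPeriod_dvd, isPeriodicPt_iff_minimalPeriod_dvd, ha, hb]
    exact ⟨pow_dvd_pow 2 (le_max_left a b), pow_dvd_pow 2 (le_max_right a b)⟩

end Period

section Heap

theorem heapAux_succ {f m : ℕ} {L : List ℕ} (hm : L.max? = some m) :
    heapAux (f + 1) L =
      .node (heapAux f (L.take (L.idxOf m))) m (heapAux f (L.drop (L.idxOf m + 1))) := by
  cases L with
  | nil => simp at hm
  | cons a L => simp [heapAux, hm]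

theorem heapAux_congr {f g : ℕ} {L : List ℕ} (hf : L.length ≤ f) (hg : L.length ≤ g) :
    heapAux f L = heapAux g L := by
  induction f generalizing g L with
  | zero => rw [List.eq_nil_of_length_eq_zero (Nat.le_zero.mp hf)]; cases g <;> rfl
  | succ f ih =>
    obtain rfl | hL := eq_or_ne L []
    · cases g <;> rfl
    obtain ⟨m, hm⟩ := Option.isSome_iff_exists.mp (List.isSome_max?_of_ne_nil hL)
    obtain ⟨g, rfl⟩ := Nat.exists_eq_add_one_of_ne_zero (n := g) fun hg0 =>
      hL (List.eq_nil_of_length_eq_zero (Nat.le_zero.mp (hg0 ▸ hg)))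
    have hi : L.idxOf m < L.length := List.idxOf_lt_length_iff.mpr (List.max?_mem hm)
    rw [heapAux_succ hm, heapAux_succ hm]
    congr 1 <;> apply ih <;> simp <;> omega

theorem heapOf_append_cons {A B : List ℕ} {m : ℕ} (hA : ∀ x ∈ A, x < m)
    (hB : ∀ x ∈ B, x < m) : heapOf (A ++ m :: B) = .node (heapOf A) m (heapOf B) := by
  have hmax : (A ++ m :: B).max? = some m := by
    rw [List.max?_eq_some_iff]
    refine ⟨by simp, fun x hx => ?_⟩
    simp only [List.mem_append, List.mem_cons] at hx
    rcases hx with hx | rfl | hx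
    · exact (hA x hx).le
    · rfl
    · exact (hB x hx).le
  have hidx : (A ++ m :: B).idxOf m = A.length := by
    rw [List.idxOf_append_of_notMem fun h => (hA m h).false, List.idxOf_cons_self, add_zero]
  have hdrop : (A ++ m :: B).drop (A.length + 1) = B := by simp [List.drop_append]
  rw [heapOf, List.length_append, List.length_cons, ← add_assoc, heapAux_succ hmax, hidx,
    List.take_left, hdrop, heapAux_congr (L := A) (by omega) le_rfl,
    heapAux_congr (L := B) (by omega) le_rfl, heapOf, heapOf]

theorem heapOf_ne_nil {L : List ℕ} (hL : L ≠ []) : heapOf L ≠ .nil := by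
  obtain ⟨m, hm⟩ := Option.isSome_iff_exists.mp (List.isSome_max?_of_ne_nil hL)
  obtain ⟨f, hf⟩ := Nat.exists_eq_add_one_of_ne_zero (mt List.length_eq_zero_iff.mp hL)
  rw [heapOf, hf, heapAux_succ hm]
  exact BTree.noConfusion

theorem BTree.eheight_node {l r : BTree} (h : l ≠ .nil ∨ r ≠ .nil) (m : ℕ) :
    (BTree.node l m r).eheight = max l.eheight r.eheight + 1 := by
  rcases l with _ | ⟨ll, lm, lr⟩ <;> rcases r with _ | ⟨rl, rm, rr⟩ <;>
    simp_all [BTree.eheight, add_comm]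

end Heap

theorem List.Nodup.exists_eq_append_cons_max {α : Type*} [LinearOrder α] {L : List α}
    (hL : L.Nodup) (hne : L ≠ []) :
    ∃ A m B, L = A ++ m :: B ∧ (∀ x ∈ A, x < m) ∧ ∀ x ∈ B, x < m := by
  obtain ⟨m, hm⟩ := Option.isSome_iff_exists.mp (List.isSome_max?_of_ne_nil hne)
  obtain ⟨hmL, hle⟩ := List.max?_eq_some_iff.mp hm
  obtain ⟨A, B, rfl⟩ := List.append_of_mem hmL
  obtain ⟨-, hmB, hdisj⟩ := List.nodup_append.mp hL
  refine ⟨A, m, B, rfl, fun x hx => ?_, fun x hx => ?_⟩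
  · exact (hle x (by simp [hx])).lt_of_ne (hdisj x hx m List.mem_cons_self)
  · exact (hle x (by simp [hx])).lt_of_ne fun h => (List.nodup_cons.mp hmB).1 (h ▸ hx)

theorem minimalPeriod_phiWord (L : List ℕ) (hL : L.Nodup) :
    minimalPeriod phiWord L = 2 ^ (heapOf L).eheight := by
  induction h : L.length using Nat.strong_induction_on generalizing L with
  | _ N ih =>
  obtain rfl | hne := eq_or_ne L []
  · exact minimalPeriod_eq_one_iff_isFixedPt.mpr (by simp [IsFixedPt, phiWord])
  obtain ⟨A, m, B, rfl, hA, hB⟩ := hL.exists_eq_append_cons_max hne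
  rw [heapOf_append_cons hA hB]
  by_cases hAB : A = [] ∧ B = []
  · obtain ⟨rfl, rfl⟩ := hAB
    exact minimalPeriod_eq_one_iff_isFixedPt.mpr (by simp [IsFixedPt, phiWord, reverseBlockTails])
  rw [not_and_or, ← ne_eq, ← ne_eq] at hAB
  have hndA : A.Nodup := hL.sublist (List.sublist_append_left A _)
  have hndB : B.Nodup := (List.nodup_append.mp hL).2.1.of_cons
  rw [BTree.eheight_node (hAB.imp heapOf_ne_nil heapOf_ne_nil)]
  exact minimalPeriod_phiWord_append_cons hA hB hL hAB
    (ih _ (by simp [← h]) A hndA rfl) (ih _ (by simp [← h]; omega) B hndB rfl)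

section OneLine

variable {n : ℕ}

theorem oneLine1_eq_map (w : Equiv.Perm (Fin n)) :
    oneLine1 w = (oneLineF w).map fun i : Fin n => (i : ℕ) + 1 := by
  rw [oneLine1, oneLineF, List.map_map]
  rfl

theorem oneLine1_injective : Injective (oneLine1 : Equiv.Perm (Fin n) → List ℕ) := by
  intro w w' h
  ext i
  have := List.map_inj_left.mp h i (List.mem_finRange i)
  simpa using this

theorem oneLine1_nodup (w : Equiv.Perm (Fin n)) : (oneLine1 w).Nodup :=
  (List.nodup_finRange n).map fun _ _ h => w.injective (Fin.ext (Nat.add_right_cancel h))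

theorem IsPhi.oneLine1_eq {w w' : Equiv.Perm (Fin n)} (h : IsPhi w w') :
    oneLine1 w' = phiWord (oneLine1 w) := by
  obtain ⟨u, hu, hw'⟩ := h
  have hmono : StrictMono fun i : Fin n => (i : ℕ) + 1 := fun _ _ hab => Nat.add_lt_add_right hab 1
  rw [oneLine1_eq_map, oneLine1_eq_map, hw', foataWord_inv, hu, ← map_phiWord hmono]
  rfl

end OneLine

/-- Every orbit of `φ = F ∘ I ∘ F⁻¹ ∘ R` on `S_n` has size a
power of `2`: the orbit of `w` has size `2^h` where `h` is the height of the
heap `H(w)` of the one-line notation of `w`. -/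
theorem phi_orbit_size (n : ℕ) (φ : Equiv.Perm (Fin n) → Equiv.Perm (Fin n))
    (hφ : ∀ w, IsPhi w (φ w)) (w : Equiv.Perm (Fin n)) :
    Function.minimalPeriod φ w = 2 ^ (heapOf (oneLine1 w)).eheight := by
  have hconj : Semiconj oneLine1 φ phiWord := fun w => (hφ w).oneLine1_eq
  rw [← hconj.minimalPeriod_eq oneLine1_injective]
  exact minimalPeriod_phiWord _ (oneLine1_nodup w)
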